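/- arXiv:2605.28244 — 2 statements merged into one kernel-verified Lean document; each statement's English description precedes it below -/
import Mathlib

section
/- Let k ≥ 2 and let A = A_k ⋯ A_1 be a factorization of a contraction A into contractions A_i : H_i → H_{i+1}. Consider the canonical extended isometries Z_k : 𝒟_A → 𝒟_{A_k} ⊕ ⋯ ⊕ 𝒟_{A_1} associated with the full factorization, Z_r : 𝒟_A → 𝒟_{B_r} ⊕ ⋯ ⊕ 𝒟_{B_1} associated with the block factorization A = B_r ⋯ B_1 determined by indices 0 = j₀ < j₁ < ⋯ < j_r = k and blocks B_i := A_{j_i} ⋯ A_{j_{i−1}+1}, and, for each i, the isometry W_i : 𝒟_{B_i} → 𝒟_{A_{j_i}} ⊕ ⋯ ⊕ 𝒟_{A_{j_{i−1}+1}} associated with the factorization B_i = A_{j_i} ⋯ A_{j_{i−1}+1}. Then Z_k = (W_r ⊕ W_{r−1} ⊕ ⋯ ⊕ W_1) ∘ Z_r, where W_r ⊕ ⋯ ⊕ W_1 acts componentwise on the direct sum 𝒟_{B_r} ⊕ ⋯ ⊕ 𝒟_{B_1} after the canonical identification of ⊕_{i=r}^{1}(𝒟_{A_{j_i}} ⊕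 ⋯ ⊕ 𝒟_{A_{j_{i−1}+1}}) with 𝒟_{A_k} ⊕ ⋯ ⊕ 𝒟_{A_1}. -/
/-! The vectors `D_A h` are dense in `𝒟_A`, so a continuous map on `𝒟_A` is determined by its
values on them. Both sides of `Z_k = (W_r ⊕ ⋯ ⊕ W_1) ∘ Z_r` are continuous, and on `D_A h` they
agree because `A_{j_i + m - 1} ⋯ A_0 = (A_{j_i + m - 1} ⋯ A_{j_i}) (A_{j_i - 1} ⋯ A_0)`. -/

noncomputable section

open ContinuousLinearMap

/-- The defect operator `D_A = (I - A*A)^{1/2}` of a contraction `A`. -/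
def defectOp {E F : Type*} [NormedAddCommGroup E] [InnerProductSpace ℂ E]
    [CompleteSpace E] [NormedAddCommGroup F] [InnerProductSpace ℂ F] [CompleteSpace F]
    (A : E →L[ℂ] F) : E →L[ℂ] E :=
  CFC.sqrt (1 - (adjoint A).comp A)

/-- The defect space `𝒟_A`, the closure of the range of the defect operator. -/
def defectSpace {E F : Type*} [NormedAddCommGroup E] [InnerProductSpace ℂ E]
    [CompleteSpace E] [NormedAddCommGroup F] [InnerProductSpace ℂ F] [CompleteSpace F]
    (A : E →L[ℂ] F) : Submodule ℂ E :=
  (LinearMap.range (defectOp A : E →ₗ[ℂ] E)).topologicalClosure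

theorem defectOp_mem {E F : Type*} [NormedAddCommGroup E] [InnerProductSpace ℂ E]
    [CompleteSpace E] [NormedAddCommGroup F] [InnerProductSpace ℂ F] [CompleteSpace F]
    (A : E →L[ℂ] F) (x : E) : defectOp A x ∈ defectSpace A :=
  Submodule.le_topologicalClosure _ (LinearMap.mem_range_self _ x)

variable {H : ℕ → Type*} [∀ n, NormedAddCommGroup (H n)] [∀ n, InnerProductSpace ℂ (H n)]
  [∀ n, CompleteSpace (H n)]

/-- The product `A_{a+l-1} ⋯ A_{a+1} A_a : H a → H (a+l)` of a chain of operators. -/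
def prodLen (A : ∀ n, H n →L[ℂ] H (n + 1)) (a : ℕ) : ∀ l : ℕ, H a →L[ℂ] H (a + l)
  | 0 => ContinuousLinearMap.id ℂ (H a)
  | l + 1 => (A (a + l)).comp (prodLen A a l)

/-- The product `A_{b-1} ⋯ A_{a+1} A_a : H a → H b` (junk value `0` if `b < a`). -/
def prodSeg (A : ∀ n, H n →L[ℂ] H (n + 1)) (a b : ℕ) : H a →L[ℂ] H b :=
  if h : a ≤ b then (Nat.add_sub_cancel' h ▸ prodLen A a (b - a)) else 0

/-- The tuple `(D_{A_k} A_{k-1} ⋯ A_1 h, …, D_{A_2} A_1 h, D_{A_1} h)` (with zero-based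
indexing: component `i` is `D_{A i} (A_{i-1} ⋯ A_0 h)`), viewed as an element of the
Hilbert (ℓ²) direct sum of the defect spaces. -/
def defectTuple (A : ∀ n, H n →L[ℂ] H (n + 1)) (k : ℕ) (h : H 0) :
    PiLp 2 (fun i : Fin k => ↥(defectSpace (A i))) :=
  WithLp.toLp 2 (fun i => ⟨defectOp (A i) (prodSeg A 0 i h), defectOp_mem _ _⟩)

/-- The factorization `A = A_{k-1} ⋯ A_0` is `k`-regular if the set of defect tuples is dense
in the Hilbert direct sum of the defect spaces. -/
def IsRegularFactorization (A : ∀ n, H n →L[ℂ] H (n + 1)) (k : ℕ) : Prop :=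
  Dense (Set.range (defectTuple A k))

/-- A two-factor factorization `A = B ∘ C` is `2`-regular if
`{ D_B (C h) ⊕ D_C h : h }` is dense in `𝒟_B ⊕ 𝒟_C`. -/
def IsRegularPair {E F G : Type*} [NormedAddCommGroup E] [InnerProductSpace ℂ E]
    [CompleteSpace E] [NormedAddCommGroup F] [InnerProductSpace ℂ F] [CompleteSpace F]
    [NormedAddCommGroup G] [InnerProductSpace ℂ G] [CompleteSpace G]
    (B : F →L[ℂ] G) (C : E →L[ℂ] F) : Prop :=
  Dense (Set.range fun h : E =>
    ((WithLp.equiv 2 (↥(defectSpace B) × ↥(defectSpace C))).symm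
      (⟨defectOp B (C h), defectOp_mem _ _⟩, ⟨defectOp C h, defectOp_mem _ _⟩)))

end

section DefectSpace

variable {E F : Type*} [NormedAddCommGroup E] [InnerProductSpace ℂ E] [CompleteSpace E]
  [NormedAddCommGroup F] [InnerProductSpace ℂ F] [CompleteSpace F]

lemma denseRange_defectOp (A : E →L[ℂ] F) :
    DenseRange fun h : E => (⟨defectOp A h, defectOp_mem A h⟩ : defectSpace A) := by
  rw [DenseRange, Subtype.dense_iff, ← Set.range_comp]
  intro x hx
  rwa [defectSpace, Submodule.topologicalClosure_coe] at hx

end DefectSpace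

section ProdSeg

variable {H : ℕ → Type*} [∀ n, NormedAddCommGroup (H n)] [∀ n, InnerProductSpace ℂ (H n)]
  (A : ∀ n, H n →L[ℂ] H (n + 1))

lemma prodSeg_add (a l : ℕ) : prodSeg A a (a + l) = prodLen A a l := by
  rw [prodSeg, dif_pos (Nat.le_add_right a l)]
  generalize Nat.add_sub_cancel' (Nat.le_add_right a l) = e
  generalize a + l - a = n at e
  obtain rfl : n = l := by omega
  rfl

lemma prodSeg_self (a : ℕ) : prodSeg A a a = ContinuousLinearMap.id ℂ (H a) :=
  prodSeg_add A a 0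

lemma prodSeg_succ {a b : ℕ} (hab : a ≤ b) :
    prodSeg A a (b + 1) = (A b).comp (prodSeg A a b) := by
  obtain ⟨l, rfl⟩ := Nat.exists_eq_add_of_le hab
  rw [prodSeg_add A a l]
  exact prodSeg_add A a (l + 1)

lemma prodSeg_comp_prodSeg {a b c : ℕ} (hab : a ≤ b) (hbc : b ≤ c) :
    (prodSeg A b c).comp (prodSeg A a b) = prodSeg A a c := by
  induction c, hbc using Nat.le_induction with
  | base => rw [prodSeg_self, ContinuousLinearMap.id_comp]
  | succ c hbc ih =>
    rw [prodSeg_succ A hbc, prodSeg_succ A (hab.trans hbc), ContinuousLinearMap.comp_assoc, ih]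

end ProdSeg

theorem statement2_general {H : ℕ → Type*} [∀ n, NormedAddCommGroup (H n)]
    [∀ n, InnerProductSpace ℂ (H n)] [∀ n, CompleteSpace (H n)]
    (k : ℕ) (A : ∀ n, H n →L[ℂ] H (n + 1))
    (r : ℕ) (j : ℕ → ℕ)
    -- `Z_k`, the canonical extended isometry of the full factorization:
    (Zk : ↥(defectSpace (prodSeg A 0 k)) →ₗᵢ[ℂ]
        PiLp 2 (fun i : Fin k => ↥(defectSpace (A (i : ℕ)))))
    (hZk : ∀ h : H 0, Zk ⟨defectOp (prodSeg A 0 k) h, defectOp_mem _ h⟩ = defectTuple A k h)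
    -- `Z_r`, the canonical extended isometry of the block factorization `A = B_r ⋯ B_1`:
    (Zr : ↥(defectSpace (prodSeg A 0 k)) →ₗᵢ[ℂ]
        PiLp 2 (fun i : Fin r => ↥(defectSpace (prodSeg A (j (i : ℕ)) (j ((i : ℕ) + 1))))))
    (hZr : ∀ h : H 0, Zr ⟨defectOp (prodSeg A 0 k) h, defectOp_mem _ h⟩
        = WithLp.toLp 2 (fun i => ⟨defectOp (prodSeg A (j (i : ℕ)) (j ((i : ℕ) + 1)))
            (prodSeg A 0 (j (i : ℕ)) h), defectOp_mem _ _⟩))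
    -- `W_i`, the canonical extended isometry of the sub-factorization of the block `B_i`:
    (W : ∀ i : Fin r, ↥(defectSpace (prodSeg A (j (i : ℕ)) (j ((i : ℕ) + 1)))) →ₗᵢ[ℂ]
        PiLp 2 (fun m : Fin (j ((i : ℕ) + 1) - j (i : ℕ)) =>
          ↥(defectSpace (A (j (i : ℕ) + (m : ℕ))))))
    (hW : ∀ (i : Fin r) (x : H (j (i : ℕ))),
        W i ⟨defectOp (prodSeg A (j (i : ℕ)) (j ((i : ℕ) + 1))) x, defectOp_mem _ x⟩
          = WithLp.toLp 2 (fun m => ⟨defectOp (A (j (i : ℕ) + (m : ℕ)))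
              (prodSeg A (j (i : ℕ)) (j (i : ℕ) + (m : ℕ)) x), defectOp_mem _ _⟩)) :
    -- conclusion: `Z_k = (W_r ⊕ ⋯ ⊕ W_1) ∘ Z_r`, componentwise:
    ∀ (x : ↥(defectSpace (prodSeg A 0 k))) (i : Fin r)
      (m : Fin (j ((i : ℕ) + 1) - j (i : ℕ))) (hm : j (i : ℕ) + (m : ℕ) < k),
      Zk x ⟨j (i : ℕ) + (m : ℕ), hm⟩ = W i (Zr x i) m := by
  intro x i m hm
  have on_defect_vectors : ∀ h : H 0,
      Zk ⟨defectOp (prodSeg A 0 k) h, defectOp_mem _ h⟩ ⟨j i + m, hm⟩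
        = W i (Zr ⟨defectOp (prodSeg A 0 k) h, defectOp_mem _ h⟩ i) m := by
    intro h
    rw [hZk, hZr, hW]
    refine Subtype.ext (congrArg (defectOp (A (j i + m))) ?_)
    rw [← ContinuousLinearMap.comp_apply,
      prodSeg_comp_prodSeg A (Nat.zero_le (j i)) (Nat.le_add_right (j i) m)]
  have hcomp := (denseRange_defectOp (prodSeg A 0 k)).equalizer
    (g := fun x => Zk x ⟨j i + m, hm⟩) (h := fun x => W i (Zr x i) m)
    (by fun_prop) (by fun_prop) (funext on_defect_vectors)
  exact congrFun hcomp x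

/-- For a factorization `A = A_k ⋯ A_1` into contractions and a partition
`0 = j₀ < j₁ < ⋯ < j_r = k` with blocks `B_i = A_{j_i} ⋯ A_{j_{i-1}+1}`, the canonical
isometries satisfy `Z_k = (W_r ⊕ ⋯ ⊕ W_1) ∘ Z_r` (componentwise, after the canonical
identification of the iterated direct sum with `𝒟_{A_k} ⊕ ⋯ ⊕ 𝒟_{A_1}`). -/
theorem statement2 {H : ℕ → Type*} [∀ n, NormedAddCommGroup (H n)]
    [∀ n, InnerProductSpace ℂ (H n)] [∀ n, CompleteSpace (H n)]
    (k : ℕ) (hk : 2 ≤ k) (A : ∀ n, H n →L[ℂ] H (n + 1))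
    (hA : ∀ i : Fin k, ‖A (i : ℕ)‖ ≤ 1)
    (r : ℕ) (j : ℕ → ℕ) (hj0 : j 0 = 0) (hjr : j r = k) (hmono : ∀ i < r, j i < j (i + 1))
    -- `Z_k`, the canonical extended isometry of the full factorization:
    (Zk : ↥(defectSpace (prodSeg A 0 k)) →ₗᵢ[ℂ]
        PiLp 2 (fun i : Fin k => ↥(defectSpace (A (i : ℕ)))))
    (hZk : ∀ h : H 0, Zk ⟨defectOp (prodSeg A 0 k) h, defectOp_mem _ h⟩ = defectTuple A k h)
    -- `Z_r`, the canonical extended isometry of the block factorization `A = B_r ⋯ B_1`: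
    (Zr : ↥(defectSpace (prodSeg A 0 k)) →ₗᵢ[ℂ]
        PiLp 2 (fun i : Fin r => ↥(defectSpace (prodSeg A (j (i : ℕ)) (j ((i : ℕ) + 1))))))
    (hZr : ∀ h : H 0, Zr ⟨defectOp (prodSeg A 0 k) h, defectOp_mem _ h⟩
        = WithLp.toLp 2 (fun i => ⟨defectOp (prodSeg A (j (i : ℕ)) (j ((i : ℕ) + 1)))
            (prodSeg A 0 (j (i : ℕ)) h), defectOp_mem _ _⟩))
    -- `W_i`, the canonical extended isometry of the sub-factorization of the block `B_i`:
    (W : ∀ i : Fin r, ↥(defectSpace (prodSeg A (j (i : ℕ)) (j ((i : ℕ) + 1)))) →ₗᵢ[ℂ]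
        PiLp 2 (fun m : Fin (j ((i : ℕ) + 1) - j (i : ℕ)) =>
          ↥(defectSpace (A (j (i : ℕ) + (m : ℕ))))))
    (hW : ∀ (i : Fin r) (x : H (j (i : ℕ))),
        W i ⟨defectOp (prodSeg A (j (i : ℕ)) (j ((i : ℕ) + 1))) x, defectOp_mem _ x⟩
          = WithLp.toLp 2 (fun m => ⟨defectOp (A (j (i : ℕ) + (m : ℕ)))
              (prodSeg A (j (i : ℕ)) (j (i : ℕ) + (m : ℕ)) x), defectOp_mem _ _⟩)) :
    -- conclusion: `Z_k = (W_r ⊕ ⋯ ⊕ W_1) ∘ Z_r`, componentwise: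
    ∀ (x : ↥(defectSpace (prodSeg A 0 k))) (i : Fin r)
      (m : Fin (j ((i : ℕ) + 1) - j (i : ℕ))) (hm : j (i : ℕ) + (m : ℕ) < k),
      Zk x ⟨j (i : ℕ) + (m : ℕ), hm⟩ = W i (Zr x i) m :=
  statement2_general k A r j Zk hZk Zr hZr W hW
end

section
/- Consider the Kaijser–Varopoulos operators T₁, T₂, T₃ on ℂ⁵ defined on the standard basis e₁, …, e₅ by: T₁e₁ = e₂, T₁e₂ = (1/√3)e₅, T₁e₃ = −(1/√3)e₅, T₁e₄ = −(1/√3)e₅, T₁e₅ = 0; T₂e₁ = e₃, T₂e₂ = −(1/√3)e₅, T₂e₃ = (1/√3)e₅, T₂e₄ = −(1/√3)e₅, T₂e₅ = 0; T₃e₁ = e₄, T₃e₂ = −(1/√3)e₅, T₃e₃ = −(1/√3)e₅, T₃e₄ = (1/√3)e₅, T₃e₅ = 0. Then each T_i is a contraction, T := T₁T₂T₃ = 0, dim 𝒟_T = 5 while dim 𝒟_{T₁} = dim 𝒟_{T₂} = dim 𝒟_{T₃} = 3, and consequently the factorization T = T₁T₂T₃ is not 3-regular; in particular (T₁, T₂,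 T₃) is not a symmetric 3-regular tuple. -/
noncomputable section
/-- The chain of operators corresponding to the ordered product
`T_{σ(1)} T_{σ(2)} ⋯ T_{σ(k)}` of a `k`-tuple of operators on a single space: the operator
applied first (index `0` in the chain) is `T_{σ(k)}`, and the one applied last is `T_{σ(1)}`. -/
def chainOf {E : Type*} [NormedAddCommGroup E] [InnerProductSpace ℂ E] [CompleteSpace E]
    {k : ℕ} (T : Fin k → (E →L[ℂ] E)) (σ : Equiv.Perm (Fin k)) : ℕ → (E →L[ℂ] E) :=
  fun n => if h : n < k then T (σ ((⟨n, h⟩ : Fin k).rev)) else 1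
end

noncomputable section
namespace KV

/-- `1/√3` as a complex number. -/
def c : ℂ := (Real.sqrt 3 : ℂ)⁻¹

/-- The matrix of the first Kaijser–Varopoulos operator. -/
def M1 : Matrix (Fin 5) (Fin 5) ℂ :=
  !![0, 0, 0, 0, 0;
     1, 0, 0, 0, 0;
     0, 0, 0, 0, 0;
     0, 0, 0, 0, 0;
     0, c, -c, -c, 0]

/-- The matrix of the second Kaijser–Varopoulos operator. -/
def M2 : Matrix (Fin 5) (Fin 5) ℂ :=
  !![0, 0, 0, 0, 0;
     0, 0, 0, 0, 0;
     1, 0, 0, 0, 0;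
     0, 0, 0, 0, 0;
     0, -c, c, -c, 0]

/-- The matrix of the third Kaijser–Varopoulos operator. -/
def M3 : Matrix (Fin 5) (Fin 5) ℂ :=
  !![0, 0, 0, 0, 0;
     0, 0, 0, 0, 0;
     0, 0, 0, 0, 0;
     1, 0, 0, 0, 0;
     0, -c, -c, c, 0]

/-- The first Kaijser–Varopoulos operator on `ℂ⁵`. -/
def T1 : EuclideanSpace ℂ (Fin 5) →L[ℂ] EuclideanSpace ℂ (Fin 5) :=
  Matrix.toEuclideanCLM (𝕜 := ℂ) M1

/-- The second Kaijser–Varopoulos operator on `ℂ⁵`. -/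
def T2 : EuclideanSpace ℂ (Fin 5) →L[ℂ] EuclideanSpace ℂ (Fin 5) :=
  Matrix.toEuclideanCLM (𝕜 := ℂ) M2

/-- The third Kaijser–Varopoulos operator on `ℂ⁵`. -/
def T3 : EuclideanSpace ℂ (Fin 5) →L[ℂ] EuclideanSpace ℂ (Fin 5) :=
  Matrix.toEuclideanCLM (𝕜 := ℂ) M3

end KV
end

/-!
Each `Tᵢ` is a partial isometry: `Mᵢ Mᵢᴴ` is the projection onto `span {e_{i+1}, e₅}`,
which contains the range of `Mᵢ`, so `Mᵢ Mᵢᴴ Mᵢ = Mᵢ`. Hence `1 - Tᵢ*Tᵢ` is an orthogonal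
projection, which is therefore its own square root, so `D_{Tᵢ} = 1 - Tᵢ*Tᵢ` and
`dim 𝒟_{Tᵢ} = tr (1 - Tᵢ*Tᵢ) = 5 - tr (Mᵢ Mᵢᴴ) = 3`. On the other hand `T = 0`, so `D_T = 1`.
The defect tuple is linear in `h`, so in finite dimensions its range is dense only if it is
everything, which forces `dim 𝒟_{T₁} + dim 𝒟_{T₂} + dim 𝒟_{T₃} ≤ dim ℂ⁵`; but `9 > 5`.
-/

open ContinuousLinearMap Module

theorem isStarProjection_star_mul_self_of_mul_star_mul_self {R : Type*} [Semigroup R]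
    [StarMul R] {a : R} (h : a * star a * a = a) : IsStarProjection (star a * a) where
  isIdempotentElem := by
    rw [IsIdempotentElem, mul_assoc, ← mul_assoc a, h]
  isSelfAdjoint := .star_mul_self a

section Defect

variable {E F : Type*} [NormedAddCommGroup E] [InnerProductSpace ℂ E] [CompleteSpace E]
  [NormedAddCommGroup F] [InnerProductSpace ℂ F] [CompleteSpace F] {A : E →L[ℂ] F}

theorem defectOp_eq_of_isStarProjection (hA : IsStarProjection (adjoint A ∘L A)) :
    defectOp A = 1 - adjoint A ∘L A :=
  CFC.sqrt_unique hA.one_sub.isIdempotentElem.eq hA.one_sub.nonneg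

theorem norm_le_one_of_isStarProjection (hA : IsStarProjection (adjoint A ∘L A)) : ‖A‖ ≤ 1 := by
  have h := hA.norm_le
  rw [norm_adjoint_comp_self] at h
  nlinarith [norm_nonneg A]

theorem finrank_defectSpace_of_isStarProjection [FiniteDimensional ℂ E]
    (hA : IsStarProjection (adjoint A ∘L A)) :
    (finrank ℂ (defectSpace A) : ℂ) = LinearMap.trace ℂ E ↑(1 - adjoint A ∘L A) := by
  have hidem : IsIdempotentElem ((1 - adjoint A ∘L A : E →L[ℂ] E) : E →ₗ[ℂ] E) :=
    congrArg ContinuousLinearMap.toLinearMap hA.one_sub.isIdempotentElem.eq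
  rw [(LinearMap.IsIdempotentElem.isProj_range _ hidem).trace, defectSpace,
    defectOp_eq_of_isStarProjection hA,
    (Submodule.closed_of_finiteDimensional _).submodule_topologicalClosure_eq]

theorem finrank_defectSpace_zero [FiniteDimensional ℂ E] :
    finrank ℂ (defectSpace (0 : E →L[ℂ] F)) = finrank ℂ E := by
  have h := finrank_defectSpace_of_isStarProjection (A := (0 : E →L[ℂ] F)) (by simp)
  simpa only [map_zero, comp_zero, sub_zero, toLinearMap_one, LinearMap.trace_one,
    Nat.cast_inj] using h

end Defect

section Regular

variable {H : ℕ → Type*} [∀ n, NormedAddCommGroup (H n)] [∀ n, InnerProductSpace ℂ (H n)]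
  [∀ n, CompleteSpace (H n)]

noncomputable def defectTupleₗ (A : ∀ n, H n →L[ℂ] H (n + 1)) (k : ℕ) :
    H 0 →ₗ[ℂ] PiLp 2 (fun i : Fin k => ↥(defectSpace (A i))) where
  toFun := defectTuple A k
  map_add' x y := by
    ext i
    simp [defectTuple]
  map_smul' a x := by
    ext i
    simp [defectTuple]

theorem IsRegularFactorization.sum_finrank_defectSpace_le [∀ n, FiniteDimensional ℂ (H n)]
    {A : ∀ n, H n →L[ℂ] H (n + 1)} {k : ℕ} (hA : IsRegularFactorization A k) :
    ∑ i : Fin k, finrank ℂ (defectSpace (A i)) ≤ finrank ℂ (H 0) := by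
  have hdense : Dense (SetLike.coe (LinearMap.range (defectTupleₗ A k))) := by
    rwa [LinearMap.coe_range]
  have htop : LinearMap.range (defectTupleₗ A k) = ⊤ := by
    rwa [Submodule.dense_iff_topologicalClosure_eq_top,
      (Submodule.closed_of_finiteDimensional _).submodule_topologicalClosure_eq] at hdense
  calc ∑ i : Fin k, finrank ℂ (defectSpace (A i))
      = finrank ℂ (PiLp 2 (fun i : Fin k => ↥(defectSpace (A i)))) :=
        ((WithLp.linearEquiv 2 ℂ _).finrank_eq.trans (finrank_pi_fintype ℂ)).symm
    _ = finrank ℂ (LinearMap.range (defectTupleₗ A k)) := by rw [htop, finrank_top]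
    _ ≤ finrank ℂ (H 0) := LinearMap.finrank_range_le _

end Regular

section Matrix

variable {n : Type*} [Fintype n] [DecidableEq n] {M : Matrix n n ℂ}

open Matrix

theorem Matrix.trace_toEuclideanCLM (Q : Matrix n n ℂ) :
    LinearMap.trace ℂ (EuclideanSpace ℂ n) ↑(toEuclideanCLM (𝕜 := ℂ) Q) = Q.trace := by
  rw [coe_toEuclideanCLM_eq_toEuclideanLin, toEuclideanLin_eq_toLin_orthonormal,
    LinearMap.trace_eq_matrix_trace ℂ (EuclideanSpace.basisFun n ℂ).toBasis,
    LinearMap.toMatrix_toLin]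

theorem Matrix.isStarProjection_adjoint_comp_toEuclideanCLM (hM : M * Mᴴ * M = M) :
    IsStarProjection (adjoint (toEuclideanCLM (𝕜 := ℂ) M) ∘L toEuclideanCLM (𝕜 := ℂ) M) := by
  rw [← star_eq_adjoint, ← mul_def, ← map_star, ← map_mul]
  exact (isStarProjection_star_mul_self_of_mul_star_mul_self hM).map _

theorem Matrix.finrank_defectSpace_toEuclideanCLM (hM : M * Mᴴ * M = M) :
    (finrank ℂ (defectSpace (toEuclideanCLM (𝕜 := ℂ) M)) : ℂ) =
      Fintype.card n - (M * Mᴴ).trace := by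
  rw [finrank_defectSpace_of_isStarProjection (isStarProjection_adjoint_comp_toEuclideanCLM hM),
    ← star_eq_adjoint, ← mul_def, ← map_star, ← map_mul, ← map_one (toEuclideanCLM (𝕜 := ℂ)),
    ← map_sub, trace_toEuclideanCLM, trace_sub, trace_one, star_eq_conjTranspose,
    trace_mul_comm]

end Matrix

namespace KV

open Matrix

theorem c_mul_c : c * c = 3⁻¹ := by
  rw [c, ← mul_inv, ← Complex.ofReal_mul, Real.mul_self_sqrt (by norm_num)]
  norm_num

theorem conj_c : starRingEnd ℂ c = c := by
  rw [c, map_inv₀, Complex.conj_ofReal]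

theorem M1_mul_conjTranspose : M1 * M1ᴴ = diagonal ![0, 1, 0, 0, 1] := by
  ext i j
  fin_cases i <;> fin_cases j <;> simp [M1, mul_apply, Fin.sum_univ_five, conj_c, c_mul_c]
  norm_num

theorem M1_mul_conjTranspose_mul : M1 * M1ᴴ * M1 = M1 := by
  rw [M1_mul_conjTranspose]
  ext i j
  fin_cases i <;> fin_cases j <;> simp [M1]

theorem trace_M1_mul_conjTranspose : (M1 * M1ᴴ).trace = 2 := by
  rw [M1_mul_conjTranspose, trace_diagonal]
  simp [Fin.sum_univ_five, one_add_one_eq_two]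

theorem M2_mul_conjTranspose : M2 * M2ᴴ = diagonal ![0, 0, 1, 0, 1] := by
  ext i j
  fin_cases i <;> fin_cases j <;> simp [M2, mul_apply, Fin.sum_univ_five, conj_c, c_mul_c]
  norm_num

theorem M2_mul_conjTranspose_mul : M2 * M2ᴴ * M2 = M2 := by
  rw [M2_mul_conjTranspose]
  ext i j
  fin_cases i <;> fin_cases j <;> simp [M2]

theorem trace_M2_mul_conjTranspose : (M2 * M2ᴴ).trace = 2 := by
  rw [M2_mul_conjTranspose, trace_diagonal]
  simp [Fin.sum_univ_five, one_add_one_eq_two]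

theorem M3_mul_conjTranspose : M3 * M3ᴴ = diagonal ![0, 0, 0, 1, 1] := by
  ext i j
  fin_cases i <;> fin_cases j <;> simp [M3, mul_apply, Fin.sum_univ_five, conj_c, c_mul_c]
  norm_num

theorem M3_mul_conjTranspose_mul : M3 * M3ᴴ * M3 = M3 := by
  rw [M3_mul_conjTranspose]
  ext i j
  fin_cases i <;> fin_cases j <;> simp [M3]

theorem trace_M3_mul_conjTranspose : (M3 * M3ᴴ).trace = 2 := by
  rw [M3_mul_conjTranspose, trace_diagonal]
  simp [Fin.sum_univ_five, one_add_one_eq_two]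

theorem M1_mul_M2_mul_M3 : M1 * (M2 * M3) = 0 := by
  ext i j
  fin_cases i <;> fin_cases j <;> simp [M1, M2, M3, mul_apply, Fin.sum_univ_five]

theorem norm_le_one_and_finrank_defectSpace {M : Matrix (Fin 5) (Fin 5) ℂ}
    (hM : M * Mᴴ * M = M) (htr : (M * Mᴴ).trace = 2) :
    ‖toEuclideanCLM (𝕜 := ℂ) M‖ ≤ 1 ∧ finrank ℂ (defectSpace (toEuclideanCLM (𝕜 := ℂ) M)) = 3 := by
  refine ⟨norm_le_one_of_isStarProjection (isStarProjection_adjoint_comp_toEuclideanCLM hM), ?_⟩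
  have h := finrank_defectSpace_toEuclideanCLM hM
  rw [htr] at h
  norm_num at h
  exact_mod_cast h

end KV

/-- The Kaijser–Varopoulos operators `T₁, T₂, T₃` on `ℂ⁵` are contractions
with `T = T₁T₂T₃ = 0`, `dim 𝒟_T = 5`, `dim 𝒟_{T₁} = dim 𝒟_{T₂} = dim 𝒟_{T₃} = 3`; the
factorization `T = T₁T₂T₃` is not `3`-regular, and `(T₁, T₂, T₃)` is not a symmetric
`3`-regular tuple. -/
theorem statement17 :
    (‖KV.T1‖ ≤ 1 ∧ ‖KV.T2‖ ≤ 1 ∧ ‖KV.T3‖ ≤ 1) ∧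
    KV.T1.comp (KV.T2.comp KV.T3) = 0 ∧
    Module.finrank ℂ ↥(defectSpace (KV.T1.comp (KV.T2.comp KV.T3))) = 5 ∧
    (Module.finrank ℂ ↥(defectSpace KV.T1) = 3 ∧
      Module.finrank ℂ ↥(defectSpace KV.T2) = 3 ∧
      Module.finrank ℂ ↥(defectSpace KV.T3) = 3) ∧
    ¬ IsRegularFactorization (H := fun _ => EuclideanSpace ℂ (Fin 5))
        (chainOf ![KV.T1, KV.T2, KV.T3] (Equiv.refl (Fin 3))) 3 ∧
    ¬ ∀ σ : Equiv.Perm (Fin 3),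
        IsRegularFactorization (H := fun _ => EuclideanSpace ℂ (Fin 5))
          (chainOf ![KV.T1, KV.T2, KV.T3] σ) 3 := by
  have h1 : ‖KV.T1‖ ≤ 1 ∧ finrank ℂ (defectSpace KV.T1) = 3 :=
    KV.norm_le_one_and_finrank_defectSpace KV.M1_mul_conjTranspose_mul
      KV.trace_M1_mul_conjTranspose
  have h2 : ‖KV.T2‖ ≤ 1 ∧ finrank ℂ (defectSpace KV.T2) = 3 :=
    KV.norm_le_one_and_finrank_defectSpace KV.M2_mul_conjTranspose_mul
      KV.trace_M2_mul_conjTranspose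
  have h3 : ‖KV.T3‖ ≤ 1 ∧ finrank ℂ (defectSpace KV.T3) = 3 :=
    KV.norm_le_one_and_finrank_defectSpace KV.M3_mul_conjTranspose_mul
      KV.trace_M3_mul_conjTranspose
  have hT : KV.T1.comp (KV.T2.comp KV.T3) = 0 := by
    simp only [KV.T1, KV.T2, KV.T3, ← mul_def, ← map_mul, KV.M1_mul_M2_mul_M3, map_zero]
  have hnotreg : ¬ IsRegularFactorization (H := fun _ => EuclideanSpace ℂ (Fin 5))
      (chainOf ![KV.T1, KV.T2, KV.T3] (Equiv.refl (Fin 3))) 3 := fun hreg => by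
    have h := hreg.sum_finrank_defectSpace_le
    rw [Fin.sum_univ_three] at h
    change finrank ℂ (defectSpace KV.T3) + finrank ℂ (defectSpace KV.T2) +
      finrank ℂ (defectSpace KV.T1) ≤ finrank ℂ (EuclideanSpace ℂ (Fin 5)) at h
    rw [h1.2, h2.2, h3.2, finrank_euclideanSpace_fin] at h
    omega
  refine ⟨⟨h1.1, h2.1, h3.1⟩, hT, ?_, ⟨h1.2, h2.2, h3.2⟩, hnotreg, fun h => hnotreg (h _)⟩
  rw [hT, finrank_defectSpace_zero, finrank_euclideanSpace_fin]
end
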